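/- arXiv:2603.25967 — 2 statements merged into one kernel-verified Lean document; each statement's English description precedes it below -/
import Mathlib

section
/- The function f(x₁,x₂) = x₁·exp(x₁²/(x₁²+x₂²)) (f(0,0)=0) is arc-analytic along every real analytic arc through the origin of the form γ(t) = (t·a(t), t·b(t)) with a,b real analytic and (a(0),b(0)) ≠ (0,0): the composition f∘γ is real analytic near 0. -/
noncomputable def f (p : ℝ × ℝ) : ℝ :=
  if p.1 ^ 2 + p.2 ^ 2 = 0 then 0 else p.1 * Real.exp (p.1 ^ 2 / (p.1 ^ 2 + p.2 ^ 2))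

theorem f_arc_analytic_through_origin (a b : ℝ → ℝ)
    (ha : AnalyticAt ℝ a 0) (hb : AnalyticAt ℝ b 0)
    (h0 : a 0 ^ 2 + b 0 ^ 2 ≠ 0) :
    AnalyticAt ℝ (fun t : ℝ => f (t * a t, t * b t)) 0 := by
  have hc : AnalyticAt ℝ (fun t => a t ^ 2 + b t ^ 2) 0 := (ha.pow 2).add (hb.pow 2)
  have hh : AnalyticAt ℝ
      (fun t : ℝ => t * a t * Real.exp (a t ^ 2 / (a t ^ 2 + b t ^ 2))) 0 := by
    exact (analyticAt_id.mul ha).mul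
      ((((ha.pow 2).div hc h0).rexp))
  apply hh.congr
  have hne : ∀ᶠ t in nhds (0 : ℝ), a t ^ 2 + b t ^ 2 ≠ 0 :=
    hc.continuousAt.eventually_ne h0
  filter_upwards [hne] with t ht
  by_cases h : t = 0
  · subst h
    simp [f]
  · have hden : (t * a t) ^ 2 + (t * b t) ^ 2 = t ^ 2 * (a t ^ 2 + b t ^ 2) := by ring
    have hd : (t * a t) ^ 2 + (t * b t) ^ 2 ≠ 0 := by
      rw [hden]; exact mul_ne_zero (pow_ne_zero 2 h) ht
    simp only [f, hd, if_neg]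
    rw [hden]
    have : (t * a t) ^ 2 / (t ^ 2 * (a t ^ 2 + b t ^ 2)) = a t ^ 2 / (a t ^ 2 + b t ^ 2) := by
      rw [mul_pow, mul_div_mul_left _ _ (pow_ne_zero 2 h)]
    rw [this]
    simp
end

section
/- The function g(x₁,x₂) = (x₁⁶+x₂⁶)^(1/3) is not real analytic at the origin: there is no power series representation of g in any neighbourhood of (0,0) in ℝ². -/
noncomputable def g (p : ℝ × ℝ) : ℝ := (p.1 ^ 6 + p.2 ^ 6) ^ ((1 : ℝ) / 3)

lemma g_scale (t : ℝ) (v : ℝ × ℝ) : g (t • v) = g v * t ^ 2 := by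
  have h1 : (0:ℝ) ≤ t ^ 6 := by positivity
  have h2 : (0:ℝ) ≤ v.1 ^ 6 + v.2 ^ 6 := by positivity
  have : g (t • v) = (t ^ 6 * (v.1 ^ 6 + v.2 ^ 6)) ^ ((1:ℝ)/3) := by
    simp only [g, Prod.smul_fst, Prod.smul_snd, smul_eq_mul]
    ring_nf
  rw [this, Real.mul_rpow h1 h2]
  have : (t ^ 6 : ℝ) ^ ((1:ℝ)/3) = t ^ 2 := by
    have : (t ^ 6 : ℝ) = (t ^ 2) ^ (3:ℕ) := by ring
    rw [this, ← Real.rpow_natCast (t^2) 3, ← Real.rpow_mul (by positivity)]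
    norm_num
  rw [this, g]; ring

lemma g_contDiff (hA : AnalyticAt ℝ g (0, 0)) : ContDiff ℝ 2 g := by
  rw [contDiff_iff_contDiffAt]
  intro x
  by_cases hx : x = (0, 0)
  · rw [hx]; exact hA.contDiffAt
  · have hne : x.1 ^ 6 + x.2 ^ 6 ≠ 0 := by
      intro h
      apply hx
      have h1 : (0:ℝ) ≤ x.1 ^ 6 := by positivity
      have h2 : (0:ℝ) ≤ x.2 ^ 6 := by positivity
      have e1 : x.1 ^ 6 = 0 := by linarith
      have e2 : x.2 ^ 6 = 0 := by linarith
      have : x.1 = 0 := by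
        exact pow_eq_zero_iff (by norm_num) |>.mp e1
      have : x.2 = 0 := by
        exact pow_eq_zero_iff (by norm_num) |>.mp e2
      exact Prod.ext (by simp_all) (by simp_all)
    exact ContDiffAt.rpow_const_of_ne
      (((contDiff_fst.pow 6).add (contDiff_snd.pow 6)).contDiffAt) hne

lemma quad_deriv (c : ℝ) :
    (iteratedFDeriv ℝ 2 (fun t : ℝ => c * t ^ 2) 0) (fun _ => 1) = 2 * c := by
  have : iteratedDeriv 2 (fun t : ℝ => c * t ^ 2) 0 = 2 * c := by
    rw [show (2:ℕ) = 1 + 1 from rfl, iteratedDeriv_succ, iteratedDeriv_succ,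
      iteratedDeriv_zero]
    have hd : deriv (fun t : ℝ => c * t ^ 2) = fun t => c * (2 * t) := by
      funext t
      simp [deriv_const_mul, mul_comm]
    rw [hd]
    have : deriv (fun t : ℝ => c * (2 * t)) 0 = c * 2 := by
      have e : (fun t : ℝ => c * (2 * t)) = fun t : ℝ => (c * 2) * t := by funext t; ring
      rw [e, deriv_const_mul_field']
      simp
    rw [this]; ring
  rw [← this, iteratedDeriv_eq_iteratedFDeriv]

theorem g_not_analytic_at_origin : ¬ AnalyticAt ℝ g (0, 0) := by
  intro hA
  have hcd := g_contDiff hA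
  set B := iteratedFDeriv ℝ 2 g (0, 0) with hB
  -- key: B (fun _ => v) = 2 * g v
  have key : ∀ v : ℝ × ℝ, B (fun _ => v) = 2 * g v := by
    intro v
    set L : ℝ →L[ℝ] ℝ × ℝ := ContinuousLinearMap.toSpanSingleton ℝ v with hL
    have hcomp : g ∘ L = fun t : ℝ => g v * t ^ 2 := by
      funext t
      simp only [Function.comp_apply, hL, ContinuousLinearMap.toSpanSingleton_apply]
      exact g_scale t v
    have := L.iteratedFDeriv_comp_right hcd (0 : ℝ) (le_refl 2)
    rw [hcomp] at this
    have := congrArg (fun m => m (fun _ : Fin 2 => (1:ℝ))) this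
    simp only [ContinuousMultilinearMap.compContinuousLinearMap_apply] at this
    rw [quad_deriv] at this
    have hL1 : (fun _ : Fin 2 => L 1) = fun _ : Fin 2 => v := by
      funext i; simp [hL, ContinuousLinearMap.toSpanSingleton_apply]
    rw [hL1] at this
    simp only [map_zero] at this
    exact this.symm
  -- bilinearity / parallelogram
  have upd0 : ∀ a b c : ℝ × ℝ, Function.update ![a, b] 0 c = ![c, b] := by
    intro a b c; funext i; fin_cases i <;> simp
  have upd1 : ∀ a b c : ℝ × ℝ, Function.update ![a, b] 1 c = ![a, c] := by
    intro a b c; funext i; fin_cases i <;> simp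
  have add0 : ∀ a a' b : ℝ × ℝ, B ![a + a', b] = B ![a, b] + B ![a', b] := by
    intro a a' b
    have h := B.map_update_add ![a, b] 0 a a'
    rwa [upd0, upd0, upd0] at h
  have add1 : ∀ a b b' : ℝ × ℝ, B ![a, b + b'] = B ![a, b] + B ![a, b'] := by
    intro a b b'
    have h := B.map_update_add ![a, b] 1 b b'
    rwa [upd1, upd1, upd1] at h
  have zero0 : ∀ b : ℝ × ℝ, B ![0, b] = 0 := by
    intro b
    exact B.map_coord_zero 0 (by simp)
  have zero1 : ∀ a : ℝ × ℝ, B ![a, 0] = 0 := by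
    intro a
    exact B.map_coord_zero 1 (by simp)
  have neg0 : ∀ a b : ℝ × ℝ, B ![-a, b] = - B ![a, b] := by
    intro a b
    have h := add0 a (-a) b
    rw [add_neg_cancel, zero0] at h
    linarith
  have neg1 : ∀ a b : ℝ × ℝ, B ![a, -b] = - B ![a, b] := by
    intro a b
    have h := add1 a b (-b)
    rw [add_neg_cancel, zero1] at h
    linarith
  have diag : ∀ v : ℝ × ℝ, B ![v, v] = 2 * g v := by
    intro v
    rw [← key v]
    congr 1
    funext i; fin_cases i <;> rfl
  -- parallelogram identity
  set u : ℝ × ℝ := (1, 0)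
  set w : ℝ × ℝ := (0, 1)
  have hpar : B ![u + w, u + w] + B ![u + -w, u + -w]
      = 2 * B ![u, u] + 2 * B ![w, w] := by
    rw [add0, add1, add1, add0, add1, add1, neg0, neg1, neg1, neg0,
      neg_neg]
    ring
  rw [diag, diag, diag, diag] at hpar
  have hg1 : g u = 1 := by
    simp [g, u]
  have hg2 : g w = 1 := by
    simp [g, w]
  have hg3 : g (u + w) = (2:ℝ) ^ ((1:ℝ)/3) := by
    have : u + w = ((1:ℝ), (1:ℝ)) := by simp [u, w]
    rw [this]
    norm_num [g]
  have hg4 : g (u + -w) = (2:ℝ) ^ ((1:ℝ)/3) := by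
    have : u + -w = ((1:ℝ), (-1:ℝ)) := by simp [u, w, Prod.ext_iff]
    rw [this]
    norm_num [g]
  rw [hg1, hg2, hg3, hg4] at hpar
  have h2 : (2:ℝ) ^ ((1:ℝ)/3) = 2 := by linarith
  have h3 := congrArg (fun x : ℝ => x ^ (3:ℕ)) h2
  simp only [← Real.rpow_natCast ((2:ℝ) ^ ((1:ℝ)/3)) 3] at h3
  rw [← Real.rpow_mul (by norm_num : (0:ℝ) ≤ 2)] at h3
  norm_num at h3
end
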